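/- arXiv:1412.3016 — 2 statements merged into one kernel-verified Lean document; each statement's English description precedes it below -/
import Mathlib

section
/- For an indeterminate string x with prefix table π, if x[1..κ] (κ < n) is a rooted cover of x, then π[n-κ+1] = κ, i.e., position n-κ+1 satisfies π[i] + i - 1 = n; hence every rooted cover length appears among the candidate set {κ : π[n-κ+1] ≥ κ}. -/
/-- Letters match iff their subsets intersect. -/
def IMatch {σ : Type*} (a b : Set σ) : Prop := (a ∩ b).Nonempty

/-- Occurrence (by matching) of the prefix x[1..ℓ] at position p. -/
def IOccAt {σ : Type*} (x : ℕ → Set σ) (ℓ p : ℕ) : Prop :=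
  ∀ k < ℓ, IMatch (x (p + k)) (x (1 + k))

/-- π is the prefix table of the indeterminate string x[1..n] (1-based). -/
def IsIndetPrefixTable {σ : Type*} (x : ℕ → Set σ) (n : ℕ) (π : ℕ → ℕ) : Prop :=
  π 1 = n ∧ ∀ i, 2 ≤ i → i ≤ n →
    i + π i ≤ n + 1 ∧ IOccAt x (π i) i ∧
      ∀ ℓ, i + ℓ ≤ n + 1 → IOccAt x ℓ i → ℓ ≤ π i

/-- x[1..κ] is a rooted cover of x[1..n]. -/
def RootedCover {σ : Type*} (x : ℕ → Set σ) (n κ : ℕ) : Prop :=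
  0 < κ ∧ κ < n ∧ ∀ t, 1 ≤ t → t ≤ n →
    ∃ p, 1 ≤ p ∧ p + κ ≤ n + 1 ∧ p ≤ t ∧ t < p + κ ∧ IOccAt x κ p

/-- if x[1..κ] (κ < n) is a rooted cover of x, then
π[n-κ+1] = κ (position i = n-κ+1 satisfies π[i] + i - 1 = n); hence every
rooted cover length is among the candidates {κ : π[n-κ+1] ≥ κ}. -/
theorem rooted_cover_candidate {σ : Type*} (x : ℕ → Set σ) (n : ℕ) (π : ℕ → ℕ)
    (hπ : IsIndetPrefixTable x n π) (κ : ℕ) (h : RootedCover x n κ) :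
    π (n - κ + 1) = κ ∧ κ ≤ π (n - κ + 1) := by
  obtain ⟨hκ0, hκn, hcov⟩ := h
  obtain ⟨p, hp1, hpκ, hpt, htp, hocc⟩ := hcov n (by omega) le_rfl
  have hp : p = n - κ + 1 := by omega
  subst hp
  obtain ⟨hb, hoccπ, hmax⟩ := hπ.2 (n - κ + 1) (by omega) (by omega)
  have h1 : κ ≤ π (n - κ + 1) := hmax κ (by omega) hocc
  exact ⟨by omega, h1⟩
end

section
/- For an indeterminate string x with prefix table π, x[1..κ] is a rooted cover of x[1..n] (κ < n) if and only if the set S = {i : π[i] ≥ κ} ∪ {1} satisfies: 1 ∈ S, n - κ + 1 ∈ S, and between any two consecutive elements of S ∩ [1, n-κ+1] the gap is at most κ. -/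
/-- x[1..κ] is a rooted cover of x[1..n] (0 < κ < n) iff the set
S = {i : π[i] ≥ κ} ∪ {1} contains n - κ + 1 and any element of S ∩ [1, n-κ+1]
other than n - κ + 1 is followed by another element of S ∩ [1, n-κ+1] at
distance at most κ (consecutive gaps are at most κ). -/
theorem rooted_cover_iff_candidate_set {σ : Type*} (x : ℕ → Set σ) (n : ℕ)
    (π : ℕ → ℕ) (hπ : IsIndetPrefixTable x n π) (κ : ℕ)
    (hκ : 0 < κ) (hκn : κ < n) :
    RootedCover x n κ ↔
      (let S : Set ℕ := {1} ∪ {i | 2 ≤ i ∧ i ≤ n ∧ κ ≤ π i}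
       (n - κ + 1) ∈ S ∧
       ∀ i ∈ S, i < n - κ + 1 →
         ∃ i' ∈ S, i < i' ∧ i' ≤ i + κ ∧ i' ≤ n - κ + 1) := by
  obtain ⟨hπ1, hπ2⟩ := hπ
  constructor
  · rintro ⟨-, -, hcov⟩
    have key : ∀ p, 1 ≤ p → p + κ ≤ n + 1 → IOccAt x κ p →
        p ∈ ({1} ∪ {i | 2 ≤ i ∧ i ≤ n ∧ κ ≤ π i} : Set ℕ) := by
      intro p hp1 hpn hocc
      rcases eq_or_lt_of_le hp1 with h | h
      · exact Or.inl h.symm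
      · have h2 : 2 ≤ p := h
        have hn : p ≤ n := by omega
        obtain ⟨-, -, hmax⟩ := hπ2 p h2 hn
        exact Or.inr ⟨h2, hn, hmax κ hpn hocc⟩
    refine ⟨?_, ?_⟩
    · obtain ⟨p, hp1, hpn, hpt, htp, hocc⟩ := hcov n (by omega) le_rfl
      have hpm : p = n - κ + 1 := by omega
      exact hpm ▸ key p hp1 hpn hocc
    · intro i hi hilt
      obtain ⟨p, hp1, hpn, hpt, htp, hocc⟩ := hcov (i + κ) (by omega) (by omega)
      exact ⟨p, key p hp1 hpn hocc, by omega, by omega, by omega⟩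
  · rintro ⟨hmS, hgap⟩
    have hm2 : 2 ≤ n - κ + 1 := by omega
    have hmn : n - κ + 1 ≤ n := by omega
    obtain ⟨hbound, hoccm, -⟩ := hπ2 (n - κ + 1) hm2 hmn
    have hκm : κ ≤ π (n - κ + 1) := by
      rcases hmS with h | h
      · exact absurd h (by simp; omega)
      · exact h.2.2
    have hocc1 : IOccAt x κ 1 := by
      intro k hk
      obtain ⟨c, hc⟩ := hoccm k (by omega)
      exact ⟨c, hc.2, hc.2⟩
    have hSocc : ∀ p ∈ ({1} ∪ {i | 2 ≤ i ∧ i ≤ n ∧ κ ≤ π i} : Set ℕ),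
        p ≤ n - κ + 1 → 1 ≤ p ∧ p + κ ≤ n + 1 ∧ IOccAt x κ p := by
      intro p hp hpm
      rcases hp with hp | hp
      · have hp1 : p = 1 := hp
        subst hp1
        exact ⟨le_rfl, by omega, hocc1⟩
      · obtain ⟨h2, hn, hκp⟩ := hp
        obtain ⟨-, hoc, -⟩ := hπ2 p h2 hn
        exact ⟨by omega, by omega, fun k hk => hoc k (by omega)⟩
    refine ⟨hκ, hκn, ?_⟩
    have main : ∀ t, 1 ≤ t → t ≤ n →
        ∃ p, p ∈ ({1} ∪ {i | 2 ≤ i ∧ i ≤ n ∧ κ ≤ π i} : Set ℕ) ∧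
          p ≤ n - κ + 1 ∧ p ≤ t ∧ t < p + κ := by
      intro t ht
      induction t, ht using Nat.le_induction with
      | base => exact fun _ => ⟨1, Or.inl rfl, by omega, le_rfl, by omega⟩
      | succ t ht ih =>
        intro htn
        obtain ⟨p, hpS, hpm, hpt, htp⟩ := ih (by omega)
        by_cases h : t + 1 < p + κ
        · exact ⟨p, hpS, hpm, by omega, h⟩
        · have hplt : p < n - κ + 1 := by omega
          obtain ⟨p', hp'S, hlt, hle, hlem⟩ := hgap p hpS hplt
          exact ⟨p', hp'S, hlem, by omega, by omega⟩
    intro t ht htn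
    obtain ⟨p, hpS, hpm, hpt, htp⟩ := main t ht htn
    obtain ⟨h1, h2, h3⟩ := hSocc p hpS hpm
    exact ⟨p, h1, h2, hpt, htp, h3⟩
end
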